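/- arXiv:2011.13770 — 3 statements merged into one kernel-verified Lean document; each statement's English description precedes it below -/
import Mathlib

section
/- Let Ω be a real-connected slice-domain in W. Then for every I ∈ 𝒞, the set Ω_I = Ω ∩ ℂ_I^d is open and connected in the Euclidean topology of ℂ_I^d. -/
noncomputable section

/-- `ℝ^{2n}` as a Euclidean space. -/
abbrev V (n : ℕ) : Type := EuclideanSpace ℝ (Fin (2 * n))

/-- `End(ℝ^{2n})`: the (continuous, hence in finite dimension all) real-linear
endomorphisms of `ℝ^{2n}`; multiplication is composition. -/
abbrev EndE (n : ℕ) : Type := V n →L[ℝ] V n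

/-- The set `𝔠_n` of complex structures on `ℝ^{2n}`. -/
def CS (n : ℕ) : Set (EndE n) := {I | I * I = -1}

/-- The slice `ℂ_I = {x·id + y·I : x, y ∈ ℝ}`. -/
def CI {n : ℕ} (I : EndE n) : Set (EndE n) := {A | ∃ x y : ℝ, A = x • (1 : EndE n) + y • I}

/-- The slice `ℂ_I^d ⊆ [End(ℝ^{2n})]^d`. -/
def CId (n d : ℕ) (I : EndE n) : Set (Fin d → EndE n) := {q | ∀ ℓ, q ℓ ∈ CI I}

/-- `ℝ^d` identified with the tuples `(x₁·id, …, x_d·id)`. -/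
def RealSet (n d : ℕ) : Set (Fin d → EndE n) := {q | ∀ ℓ, ∃ x : ℝ, q ℓ = x • (1 : EndE n)}

/-- The weak slice-cone `W = ⋃_{I ∈ 𝒞} ℂ_I^d`. -/
def Wcone (n d : ℕ) (𝒞 : Set (EndE n)) : Set (Fin d → EndE n) := ⋃ I ∈ 𝒞, CId n d I

/-- `Ω` is slice-open: `Ω ⊆ W` and for every `I ∈ 𝒞`, `Ω ∩ ℂ_I^d` is open in the
Euclidean (subspace) topology of `ℂ_I^d`. -/
def SliceOpen (n d : ℕ) (𝒞 : Set (EndE n)) (Ω : Set (Fin d → EndE n)) : Prop :=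
  Ω ⊆ Wcone n d 𝒞 ∧ ∀ I ∈ 𝒞, ∃ U : Set (Fin d → EndE n), IsOpen U ∧ Ω ∩ CId n d I = U ∩ CId n d I

/-- The slice topology `τ_s`: a set is open iff its intersection with each slice `ℂ_I^d`
(`I ∈ 𝒞`) is open in the Euclidean topology of the slice. -/
def sliceTop (n d : ℕ) (𝒞 : Set (EndE n)) : TopologicalSpace (Fin d → EndE n) :=
  ⨆ I ∈ 𝒞, TopologicalSpace.coinduced (Subtype.val : CId n d I → Fin d → EndE n) inferInstance

/-- A slice-domain: a nonempty slice-open set, connected in the slice topology. -/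
def SliceDomain (n d : ℕ) (𝒞 : Set (EndE n)) (Ω : Set (Fin d → EndE n)) : Prop :=
  SliceOpen n d 𝒞 Ω ∧ @IsConnected _ (sliceTop n d 𝒞) Ω

/-- `Ω` is real-connected: `Ω ∩ ℝ^d` is connected (empty counts as connected). -/
def RealConnected (n d : ℕ) (Ω : Set (Fin d → EndE n)) : Prop :=
  IsPreconnected (Ω ∩ RealSet n d)

/-! Two slices `ℂ_I^d`, `ℂ_J^d` either coincide (when `J = ±I`) or meet exactly in `ℝ^d`:
in a nontrivial real algebra, `span {1, J}` with `J² = -1` is a copy of `ℂ`, whose only square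
roots of `-1` are `±J`. Now split `Ω ∩ ℂ_I^d` by open sets `u`, `v`. The connected set
`Ω ∩ ℝ^d` lies on one side, say in `u`, so the piece in `v` misses `ℝ^d` and thus every other
slice. That piece and its complement in `Ω` are then both slice-open, so by slice-connectedness
of `Ω` one of them is empty. -/

open Set Topology

section CoherentTopology

variable {X ι : Type*} [TopologicalSpace X]

abbrev coherentTopology (S : ι → Set X) (𝒞 : Set ι) : TopologicalSpace X :=
  ⨆ i ∈ 𝒞, TopologicalSpace.coinduced (Subtype.val : S i → X) inferInstance

variable {S : ι → Set X} {𝒞 : Set ι}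

theorem isOpen_coherentTopology_iff {s : Set X} :
    IsOpen[coherentTopology S 𝒞] s ↔ ∀ i ∈ 𝒞, ∃ U, IsOpen U ∧ s ∩ S i = U ∩ S i := by
  rw [coherentTopology]
  simp only [isOpen_iSup_iff, isOpen_coinduced, isOpen_induced_iff,
    Subtype.preimage_coe_eq_preimage_coe_iff, inter_comm (S _)]
  exact forall₂_congr fun _ _ => exists_congr fun _ => and_congr_right fun _ => eq_comm

variable {R : Set X}

theorem isOpen_coherentTopology_of_agree_off_slice
    (hS : ∀ i ∈ 𝒞, ∀ j ∈ 𝒞, S i = S j ∨ S i ∩ S j ⊆ R) {s t : Set X}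
    (hs : IsOpen[coherentTopology S 𝒞] s) {i₀ : ι} (hi₀ : i₀ ∈ 𝒞) {U : Set X} (hU : IsOpen U)
    (ht : t ∩ S i₀ = U ∩ S i₀) (hst : ∀ x ∉ S i₀ \ R, x ∈ t ↔ x ∈ s) :
    IsOpen[coherentTopology S 𝒞] t := by
  rw [isOpen_coherentTopology_iff] at hs ⊢
  intro i hi
  rcases hS i hi i₀ hi₀ with h | h
  · exact ⟨U, hU, h ▸ ht⟩
  · obtain ⟨V, hV, hsV⟩ := hs i hi
    refine ⟨V, hV, ?_⟩
    rw [← hsV]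
    ext x
    simp only [mem_inter_iff, and_congr_left_iff]
    exact fun hx => hst x fun hx' => hx'.2 (h ⟨hx, hx'.1⟩)

/-- The part of `Ω ∩ S i₀` lying in `v` avoids `R`, hence every other slice; so it and its
complement in `Ω` are both coherently open. -/
theorem subset_or_subset_of_inter_core_subset
    (hS : ∀ i ∈ 𝒞, ∀ j ∈ 𝒞, S i = S j ∨ S i ∩ S j ⊆ R) {Ω : Set X}
    (hΩ : @IsPreconnected _ (coherentTopology S 𝒞) Ω) (hΩo : IsOpen[coherentTopology S 𝒞] Ω)
    {i₀ : ι} (hi₀ : i₀ ∈ 𝒞) {u v : Set X} (hu : IsOpen u) (hv : IsOpen v)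
    (huv : Ω ∩ S i₀ ⊆ u ∪ v) (hdisj : Ω ∩ S i₀ ∩ (u ∩ v) = ∅) (hRu : Ω ∩ R ⊆ u) :
    Ω ∩ S i₀ ⊆ u ∨ Ω ∩ S i₀ ⊆ v := by
  obtain ⟨U, hU, hΩU⟩ := isOpen_coherentTopology_iff.1 hΩo i₀ hi₀
  set B := Ω ∩ S i₀ ∩ v with hB
  have hBR : ∀ x ∈ B, x ∉ R := fun x hx hxR =>
    (eq_empty_iff_forall_notMem.1 hdisj) x ⟨hx.1, hRu ⟨hx.1.1, hxR⟩, hx.2⟩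
  have hBo : IsOpen[coherentTopology S 𝒞] B := by
    refine isOpen_coherentTopology_of_agree_off_slice hS
      (@isOpen_empty _ (coherentTopology S 𝒞)) hi₀ (hU.inter hv) ?_ ?_
    · rw [hB, inter_right_comm, hΩU]
      ext x; simp only [mem_inter_iff]; tauto
    · exact fun x hx => iff_of_false (fun hxB => hx ⟨hxB.1.2, hBR x hxB⟩) (notMem_empty x)
  have hΩBo : IsOpen[coherentTopology S 𝒞] (Ω \ B) := by
    refine isOpen_coherentTopology_of_agree_off_slice hS hΩo hi₀ (hU.inter hu) ?_ ?_
    · ext x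
      have hxU := Set.ext_iff.1 hΩU x
      have hxuv := @huv x
      have hx := Set.ext_iff.1 hdisj x
      simp only [hB, mem_inter_iff, mem_sdiff, mem_union, mem_empty_iff_false, iff_false] at *
      tauto
    · exact fun x hx => ⟨fun h => h.1, fun h => ⟨h, fun hxB => hx ⟨hxB.1.2, hBR x hxB⟩⟩⟩
  rcases (@isPreconnected_iff_subset_of_disjoint _ (coherentTopology S 𝒞) _).1 hΩ
    B (Ω \ B) hBo hΩBo (fun x hx => em' (x ∈ B) |>.elim (fun h => Or.inr ⟨hx, h⟩) Or.inl)
    (by ext x; simp) with hΩB | hΩB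
  · exact Or.inr fun x hx => (hΩB hx.1).2
  · exact Or.inl fun x hx => (huv hx).resolve_right fun hxv => (hΩB hx.1).2 ⟨hx, hxv⟩

theorem isPreconnected_inter_slice_of_isPreconnected_inter_core
    (hS : ∀ i ∈ 𝒞, ∀ j ∈ 𝒞, S i = S j ∨ S i ∩ S j ⊆ R) (hRS : ∀ i ∈ 𝒞, R ⊆ S i) {Ω : Set X}
    (hΩ : @IsPreconnected _ (coherentTopology S 𝒞) Ω) (hΩo : IsOpen[coherentTopology S 𝒞] Ω)
    (hΩR : IsPreconnected (Ω ∩ R)) {i₀ : ι} (hi₀ : i₀ ∈ 𝒞) :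
    IsPreconnected (Ω ∩ S i₀) := by
  rw [isPreconnected_iff_subset_of_disjoint]
  intro u v hu hv huv hdisj
  have hR : Ω ∩ R ⊆ Ω ∩ S i₀ := inter_subset_inter_right Ω (hRS i₀ hi₀)
  rcases isPreconnected_iff_subset_of_disjoint.1 hΩR u v hu hv (hR.trans huv)
    (subset_empty_iff.1 (hdisj ▸ inter_subset_inter_left _ hR)) with hRu | hRv
  · exact subset_or_subset_of_inter_core_subset hS hΩ hΩo hi₀ hu hv huv hdisj hRu
  · refine (subset_or_subset_of_inter_core_subset hS hΩ hΩo hi₀ hv hu ?_ ?_ hRv).symm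
    · rwa [union_comm]
    · rwa [inter_comm v]

end CoherentTopology

section SquareRootsOfMinusOne

variable {A : Type*} [Ring A] [Algebra ℝ A] [Nontrivial A] {I J : A}

theorem eq_zero_of_smul_one_add_smul_eq_zero (hJ : J * J = -1) {c e : ℝ}
    (h : c • (1 : A) + e • J = 0) : c = 0 ∧ e = 0 := by
  have hsum : (c ^ 2 + e ^ 2) • (1 : A) = 0 := by
    calc (c ^ 2 + e ^ 2) • (1 : A) = (c • 1 + e • J) * (c • 1 - e • J) := by
          simp only [add_mul, mul_sub, smul_mul_smul_comm, one_mul, mul_one, hJ]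
          module
      _ = 0 := by rw [h, zero_mul]
  rw [← Algebra.algebraMap_eq_smul_one, FaithfulSMul.algebraMap_eq_zero_iff] at hsum
  constructor <;> nlinarith [sq_nonneg c, sq_nonneg e]

theorem eq_or_eq_neg_of_eq_smul_one_add_smul (hI : I * I = -1) (hJ : J * J = -1) {a b : ℝ}
    (h : I = a • (1 : A) + b • J) : I = J ∨ I = -J := by
  have hsq : (a ^ 2 - b ^ 2 + 1) • (1 : A) + (2 * a * b) • J = 0 := by
    calc (a ^ 2 - b ^ 2 + 1) • (1 : A) + (2 * a * b) • J = I * I + 1 := by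
          simp only [h, add_mul, mul_add, smul_mul_smul_comm, one_mul, mul_one, hJ]
          module
      _ = 0 := by rw [hI, neg_add_cancel]
  obtain ⟨h₁, h₂⟩ := eq_zero_of_smul_one_add_smul_eq_zero hJ hsq
  have ha : a = 0 := by
    rcases mul_eq_zero.1 (show a * b = 0 by linarith) with ha | hb
    · exact ha
    · nlinarith
  rcases mul_self_eq_one_iff.1 (show b * b = 1 by nlinarith) with hb | hb
  · left; simp [h, ha, hb]
  · right; simp [h, ha, hb]

theorem eq_or_eq_neg_of_smul_one_add_smul_eq (hI : I * I = -1) (hJ : J * J = -1)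
    {x y u v : ℝ} (h : x • (1 : A) + y • I = u • 1 + v • J) (hy : y ≠ 0) : I = J ∨ I = -J := by
  refine eq_or_eq_neg_of_eq_smul_one_add_smul hI hJ (a := y⁻¹ * (u - x)) (b := y⁻¹ * v) ?_
  calc I = y⁻¹ • (y • I) := by rw [smul_smul, inv_mul_cancel₀ hy, one_smul]
    _ = (y⁻¹ * (u - x)) • 1 + (y⁻¹ * v) • J := by
      rw [show y • I = (u - x) • (1 : A) + v • J by linear_combination (norm := module) h]
      module

end SquareRootsOfMinusOne

section Slices

variable {n d : ℕ}

theorem CI_neg (I : EndE n) : CI (-I) = CI I := by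
  ext A
  constructor <;> rintro ⟨x, y, rfl⟩ <;> exact ⟨x, -y, by module⟩

theorem nontrivial_EndE (hn : 1 ≤ n) : Nontrivial (EndE n) :=
  have : Nonempty (Fin (2 * n)) := ⟨⟨0, by omega⟩⟩
  inferInstance

theorem exists_eq_smul_one_of_mem_CI (hn : 1 ≤ n) {I J : EndE n} (hI : I ∈ CS n)
    (hJ : J ∈ CS n) (hIJ : ¬(I = J ∨ I = -J)) {A : EndE n} (hAI : A ∈ CI I) (hAJ : A ∈ CI J) :
    ∃ x : ℝ, A = x • (1 : EndE n) := by
  have := nontrivial_EndE hn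
  obtain ⟨x, y, rfl⟩ := hAI
  obtain ⟨u, v, h⟩ := hAJ
  by_cases hy : y = 0
  · exact ⟨x, by subst hy; module⟩
  · exact absurd (eq_or_eq_neg_of_smul_one_add_smul_eq hI hJ h hy) hIJ

theorem CId_eq_or_inter_subset_realSet (hn : 1 ≤ n) {I J : EndE n} (hI : I ∈ CS n)
    (hJ : J ∈ CS n) : CId n d I = CId n d J ∨ CId n d I ∩ CId n d J ⊆ RealSet n d := by
  by_cases hIJ : I = J ∨ I = -J
  · left
    rcases hIJ with rfl | rfl
    · rfl
    · simp only [CId, CI_neg]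
  · exact Or.inr fun q hq ℓ => exists_eq_smul_one_of_mem_CI hn hI hJ hIJ (hq.1 ℓ) (hq.2 ℓ)

theorem realSet_subset_CId (I : EndE n) : RealSet n d ⊆ CId n d I := fun q hq ℓ =>
  let ⟨x, hx⟩ := hq ℓ
  ⟨x, 0, by rw [hx]; module⟩

end Slices

theorem sliceDomain_slices_open_connected_general (n d : ℕ) (hn : 1 ≤ n)
    (𝒞 : Set (EndE n)) (hcs : 𝒞 ⊆ CS n)
    (Ω : Set (Fin d → EndE n)) (hΩ : SliceDomain n d 𝒞 Ω) (hrc : RealConnected n d Ω) :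
    ∀ I ∈ 𝒞,
      (∃ U : Set (Fin d → EndE n), IsOpen U ∧ Ω ∩ CId n d I = U ∩ CId n d I) ∧
      IsPreconnected (Ω ∩ CId n d I) := by
  obtain ⟨⟨-, hΩo⟩, hΩc⟩ := hΩ
  have hΩp : @IsPreconnected _ (coherentTopology (CId n d) 𝒞) Ω :=
    @IsConnected.isPreconnected _ (sliceTop n d 𝒞) _ hΩc
  exact fun I hI => ⟨hΩo I hI, isPreconnected_inter_slice_of_isPreconnected_inter_core
    (fun I hI J hJ => CId_eq_or_inter_subset_realSet hn (hcs hI) (hcs hJ))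
    (fun I _ => realSet_subset_CId I) hΩp (isOpen_coherentTopology_iff.2 hΩo) hrc hI⟩

/-- For a real-connected slice-domain Ω, each Ω ∩ ℂ_I^d is open and connected in the
Euclidean topology of ℂ_I^d (the empty set counting as connected). -/
theorem sliceDomain_slices_open_connected (n d : ℕ) (hn : 1 ≤ n) (hd : 1 ≤ d)
    (𝒞 : Set (EndE n)) (h𝒞 : 𝒞.Nonempty) (hsym : ∀ I ∈ 𝒞, -I ∈ 𝒞) (hcs : 𝒞 ⊆ CS n)
    (Ω : Set (Fin d → EndE n)) (hΩ : SliceDomain n d 𝒞 Ω) (hrc : RealConnected n d Ω) :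
    ∀ I ∈ 𝒞,
      (∃ U : Set (Fin d → EndE n), IsOpen U ∧ Ω ∩ CId n d I = U ∩ CId n d I) ∧
      IsPreconnected (Ω ∩ CId n d I) :=
  sliceDomain_slices_open_connected_general n d hn 𝒞 hcs Ω hΩ hrc
end
end

section
/- The topological space (W, τ_s) is connected, path-connected, and locally path-connected; in particular, any two points of W can be joined by a path that is continuous with respect to τ_s. -/
/-!
The slice topology is the final topology of the inclusions of the slices `ℂ_I^d`, each a real
linear subspace of `[End(ℝ^{2n})]^d`. A slice is convex and contains `0`, so it is path-connected
in `τ_s`, and `W` is path-connected through `0`. A final topology of a family of locally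
path-connected spaces is coinduced from their disjoint union, hence locally path-connected; convex
sets are locally path-connected, and `W` is `τ_s`-open, so `W` is locally path-connected too.
-/

noncomputable section

open Set TopologicalSpace Topology

theorem IsPathConnected.iUnion_of_forall_mem {X ι : Type*} [TopologicalSpace X] [Nonempty ι]
    {s : ι → Set X} {x : X} (hs : ∀ i, IsPathConnected (s i)) (hx : ∀ i, x ∈ s i) :
    IsPathConnected (⋃ i, s i) := by
  refine ⟨x, mem_iUnion.2 ⟨Classical.arbitrary ι, hx _⟩, fun y hy => ?_⟩
  obtain ⟨i, hyi⟩ := mem_iUnion.1 hy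
  exact ((hs i).joinedIn x (hx i) y hyi).mono (subset_iUnion s i)

section FinalTopology

variable {E ι : Type*} [TopologicalSpace E]

abbrev finalTopology (S : ι → Set E) : TopologicalSpace E :=
  ⨆ i, coinduced (Subtype.val : S i → E) inferInstance

variable {S : ι → Set E}

theorem finalTopology_eq_coinduced_sigma :
    finalTopology S = coinduced (fun p : Σ i, S i => (p.2 : E)) inferInstance := by
  simp only [finalTopology, instTopologicalSpaceSigma, coinduced_iSup, coinduced_compose]
  rfl

theorem continuous_subtype_val_finalTopology (i : ι) :
    Continuous[_, finalTopology S] (Subtype.val : S i → E) :=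
  continuous_iff_coinduced_le.2 (le_iSup (fun j => coinduced (Subtype.val : S j → E) _) i)

theorem isOpen_iUnion_finalTopology : IsOpen[finalTopology S] (⋃ i, S i) := by
  rw [finalTopology, isOpen_iSup_iff]
  intro i
  rw [isOpen_coinduced, preimage_eq_univ_iff.2 fun _ ⟨x, hx⟩ => hx ▸ mem_iUnion_of_mem i x.2]
  exact isOpen_univ

theorem isPathConnected_iUnion_finalTopology [AddCommGroup E] [Module ℝ E] [ContinuousAdd E]
    [ContinuousSMul ℝ E] [Nonempty ι] (hS : ∀ i, Convex ℝ (S i)) {x : E}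
    (hx : ∀ i, x ∈ S i) : @IsPathConnected E (finalTopology S) (⋃ i, S i) := by
  refine @IsPathConnected.iUnion_of_forall_mem _ _ (finalTopology S) _ _ _ (fun i => ?_) hx
  have := isPathConnected_iff_pathConnectedSpace.1 ((hS i).isPathConnected ⟨x, hx i⟩)
  rw [← Subtype.range_coe (s := S i)]
  exact @isPathConnected_range _ _ _ (finalTopology S) _ _ (continuous_subtype_val_finalTopology i)

theorem locallyPathConnectedSpace_finalTopology [AddCommGroup E] [IsTopologicalAddGroup E]
    [Module ℝ E] [ContinuousSMul ℝ E] [LocallyConvexSpace ℝ E] (hS : ∀ i, Convex ℝ (S i)) :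
    @LocallyPathConnectedSpace E (finalTopology S) := by
  have (i : ι) : LocallyPathConnectedSpace (S i) := (hS i).locallyPathConnectedSpace
  rw [finalTopology_eq_coinduced_sigma]
  exact LocallyPathConnectedSpace.coinduced _

end FinalTopology

section Slice

variable {n d : ℕ}

theorem convex_CId (I : EndE n) : Convex ℝ (CId n d I) := by
  rintro q hq q' hq' a b - - - ℓ
  obtain ⟨x, y, hxy⟩ := hq ℓ
  obtain ⟨x', y', hxy'⟩ := hq' ℓ
  refine ⟨a * x + b * x', a * y + b * y', ?_⟩
  simp only [Pi.add_apply, Pi.smul_apply, hxy, hxy']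
  module

theorem zero_mem_CId (I : EndE n) : (0 : Fin d → EndE n) ∈ CId n d I :=
  fun _ => ⟨0, 0, by simp only [Pi.zero_apply]; module⟩

theorem sliceTop_eq_finalTopology (𝒞 : Set (EndE n)) :
    sliceTop n d 𝒞 = finalTopology fun I : 𝒞 => CId n d I := by
  rw [sliceTop, iSup_subtype', finalTopology]

theorem Wcone_eq_iUnion (𝒞 : Set (EndE n)) : Wcone n d 𝒞 = ⋃ I : 𝒞, CId n d I :=
  biUnion_eq_iUnion _ _

end Slice

theorem sliceTop_connected_pathConnected_locPathConnected_general (n d : ℕ)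
    (𝒞 : Set (EndE n)) (h𝒞 : 𝒞.Nonempty) :
    @IsConnected _ (sliceTop n d 𝒞) (Wcone n d 𝒞) ∧
    @IsPathConnected _ (sliceTop n d 𝒞) (Wcone n d 𝒞) ∧
    @LocPathConnectedSpace {q // q ∈ Wcone n d 𝒞}
      (TopologicalSpace.induced Subtype.val (sliceTop n d 𝒞)) := by
  have : Nonempty 𝒞 := h𝒞.to_subtype
  have hpath := isPathConnected_iUnion_finalTopology (S := fun I : 𝒞 => CId n d I)
    (fun I => convex_CId I.1) fun I => zero_mem_CId I.1
  have hlocal := locallyPathConnectedSpace_finalTopology (S := fun I : 𝒞 => CId n d I)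
    fun I => convex_CId I.1
  rw [sliceTop_eq_finalTopology, Wcone_eq_iUnion]
  exact ⟨@IsPathConnected.isConnected _ (finalTopology _) _ hpath, hpath,
    @IsOpen.locallyPathConnectedSpace _ (finalTopology _) hlocal _ isOpen_iUnion_finalTopology⟩

/-- (W, τ_s) is connected, path-connected and locally path-connected. -/
theorem sliceTop_connected_pathConnected_locPathConnected (n d : ℕ) (hn : 1 ≤ n) (hd : 1 ≤ d)
    (𝒞 : Set (EndE n)) (h𝒞 : 𝒞.Nonempty) (hsym : ∀ I ∈ 𝒞, -I ∈ 𝒞) (hcs : 𝒞 ⊆ CS n) :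
    @IsConnected _ (sliceTop n d 𝒞) (Wcone n d 𝒞) ∧
    @IsPathConnected _ (sliceTop n d 𝒞) (Wcone n d 𝒞) ∧
    @LocPathConnectedSpace {q // q ∈ Wcone n d 𝒞}
      (TopologicalSpace.induced Subtype.val (sliceTop n d 𝒞)) :=
  sliceTop_connected_pathConnected_locPathConnected_general n d 𝒞 h𝒞
end
end

section
/- (Path-representation Formula) Let Ω be a slice-open set in W, let f : Ω → ℝ^{2n} be weak slice regular, let γ ∈ 𝒫(ℂ^d, Ω), let J = (J₁, …, J_k) with J₁, …, J_k ∈ 𝒞(γ, Ω), and let I ∈ 𝒞(γ, Ω) satisfy ker(1, I) ⊇ ⋂_{ℓ=1}^k ker(1, J_ℓ). Let P : (ℝ^{2n})^k → ℝ^{2n} × ℝ^{2n} be any linear map with ζ(J) ∘ P ∘ ζ(J) = ζ(J) (in particular, the slice inverse ζ⁺(J) built from the Moore–Penrose inverse). Then for every t ∈ [0,1]: f(γ^I(t)) = (1, I)( P( f(γ^{J₁}(t)), …, f(γ^{J_k}(t)) ) ). -/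
noncomputable section

/-- Φ_I : ℝ^d × ℝ^d → [End(ℝ^{2n})]^d, (x, y) ↦ (x₁·id + y₁·I, …, x_d·id + y_d·I). -/
def Phi (n d : ℕ) (I : EndE n) : (Fin d → ℝ) × (Fin d → ℝ) → Fin d → EndE n :=
  fun p ℓ => p.1 ℓ • (1 : EndE n) + p.2 ℓ • I

/-- The standard basis direction in the x-coordinates. -/
def ex (d : ℕ) (ℓ : Fin d) : (Fin d → ℝ) × (Fin d → ℝ) := (Pi.single ℓ 1, 0)

/-- The standard basis direction in the y-coordinates. -/
def ey (d : ℕ) (ℓ : Fin d) : (Fin d → ℝ) × (Fin d → ℝ) := (0, Pi.single ℓ 1)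

/-- f is weak slice regular on Ω: for every I ∈ 𝒞, f ∘ Φ_I is (Fréchet, real)
differentiable on Φ_I⁻¹(Ω) and satisfies the Cauchy–Riemann equations
∂(f∘Φ_I)/∂x_ℓ + I(∂(f∘Φ_I)/∂y_ℓ) = 0 there, for ℓ = 1, …, d. -/
def WSRegular (n d : ℕ) (𝒞 : Set (EndE n)) (Ω : Set (Fin d → EndE n))
    (f : (Fin d → EndE n) → V n) : Prop :=
  ∀ I ∈ 𝒞, DifferentiableOn ℝ (f ∘ Phi n d I) (Phi n d I ⁻¹' Ω) ∧
    ∀ p ∈ Phi n d I ⁻¹' Ω, ∀ ℓ : Fin d,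
      fderiv ℝ (f ∘ Phi n d I) p (ex d ℓ) + I (fderiv ℝ (f ∘ Phi n d I) p (ey d ℓ)) = 0

/-- Ψ_I : ℂ^d → ℂ_I^d, defined componentwise by x + y i ↦ x·id + y·I. -/
def Psi (n d : ℕ) (I : EndE n) : (Fin d → ℂ) → Fin d → EndE n :=
  fun z ℓ => (z ℓ).re • (1 : EndE n) + (z ℓ).im • I

/-- γ belongs to 𝒫(ℂ^d): γ is a continuous path on [0,1] in ℂ^d with real initial
point. -/
def IsPath0 (d : ℕ) (γ : ℝ → Fin d → ℂ) : Prop :=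
  ContinuousOn γ (Set.Icc 0 1) ∧ ∀ ℓ, (γ 0 ℓ).im = 0

/-- 𝒞(γ, Ω): the set of I ∈ 𝒞 with γ^I([0,1]) ⊆ Ω, where γ^I = Ψ_I ∘ γ. -/
def CPath (n d : ℕ) (𝒞 : Set (EndE n)) (Ω : Set (Fin d → EndE n))
    (γ : ℝ → Fin d → ℂ) : Set (EndE n) :=
  {I ∈ 𝒞 | ∀ t ∈ Set.Icc (0:ℝ) 1, Psi n d I (γ t) ∈ Ω}

/-- γ ∈ 𝒫(ℂ^d, Ω): γ ∈ 𝒫(ℂ^d) and γ^I([0,1]) ⊆ Ω for some I ∈ 𝒞. -/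
def PathIn (n d : ℕ) (𝒞 : Set (EndE n)) (Ω : Set (Fin d → EndE n))
    (γ : ℝ → Fin d → ℂ) : Prop :=
  IsPath0 d γ ∧ (CPath n d 𝒞 Ω γ).Nonempty

/-- The linear map (1, I) : ℝ^{2n} × ℝ^{2n} → ℝ^{2n}, (a, b) ↦ a + I(b). -/
def oneI (n : ℕ) (I : EndE n) : (V n × V n) →ₗ[ℝ] V n :=
  LinearMap.fst ℝ (V n) (V n) + I.toLinearMap ∘ₗ LinearMap.snd ℝ (V n) (V n)

/-- The linear map ζ(J) : ℝ^{2n} × ℝ^{2n} → (ℝ^{2n})^k, (a, b) ↦ (a + J₁(b), …, a + J_k(b)). -/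
def zeta (n k : ℕ) (J : Fin k → EndE n) : (V n × V n) →ₗ[ℝ] (Fin k → V n) :=
  LinearMap.pi fun ℓ => oneI n (J ℓ)

/-!
Put `K = (I, J₁, …, J_k)`. On `(ℝ^{2n})^{k+1}` the diagonal map `(v_ℓ) ↦ (K_ℓ v_ℓ)` is a complex
structure preserving the range of `ζ(K)`, so the quotient by that range is some `ℂ^m` on which `i`
acts through `K`. Composed with the quotient map, `z ↦ (f(Ψ_{K_ℓ}(z)))_ℓ` is holomorphic on `ℂ^d`
by the Cauchy–Riemann equations, and it vanishes at real points, where all the `Ψ_{K_ℓ}` agree.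
By the identity theorem it vanishes along `γ`, i.e. `f(γ^{K_ℓ}(t)) = a + K_ℓ b` for a single pair
`(a, b)`. Finally `(1, I) P ζ(J) (a, b) = (1, I) (a, b)`, since `P ζ(J) (a, b) - (a, b)` lies in
`ker ζ(J) ⊆ ker (1, I)`.
-/

open Set Filter Topology Metric

section ComplexStructure

variable {F : Type*} [AddCommGroup F] [Module ℝ F] [FiniteDimensional ℝ F]

/-- A complex structure `T` makes `F` a complex vector space in which `i` acts as `T`; a
`T`-invariant subspace is then a complex subspace, and its quotient is some `ℂ^m`. -/
theorem exists_linearMap_ker_eq_of_mapsTo_complexStructure (T : Module.End ℝ F)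
    (hT : T * T = -1) (S : Submodule ℝ F) (hS : ∀ v ∈ S, T v ∈ S) :
    ∃ (m : ℕ) (L : F →ₗ[ℝ] Fin m → ℂ),
      LinearMap.ker L = S ∧ ∀ v, L (T v) = Complex.I • L v := by
  let _ : Module ℂ F := Module.compHom F (Complex.lift ⟨T, hT⟩).toRingHom
  have smul_def : ∀ (z : ℂ) (v : F), z • v = z.re • v + z.im • T v := fun _ _ => rfl
  have : IsScalarTower ℝ ℂ F := ⟨fun r z v => by
    simp only [smul_def, Complex.smul_re, Complex.smul_im, smul_eq_mul, mul_smul, smul_add]⟩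
  have : Module.Finite ℂ F := Module.Finite.of_restrictScalars_finite ℝ ℂ F
  let SC : Submodule ℂ F :=
    { S with
      smul_mem' := fun z v hv =>
        smul_def z v ▸ S.add_mem (S.smul_mem _ hv) (S.smul_mem _ (hS v hv)) }
  let b := Module.finBasis ℂ (F ⧸ SC)
  refine ⟨_, (b.equivFun.toLinearMap ∘ₗ SC.mkQ).restrictScalars ℝ, ?_, fun v => ?_⟩
  · ext v
    simp only [LinearMap.mem_ker, LinearMap.restrictScalars_apply, LinearMap.coe_comp,
      LinearEquiv.coe_coe, Function.comp_apply, LinearEquiv.map_eq_zero_iff,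
      Submodule.mkQ_apply, Submodule.Quotient.mk_eq_zero]
    rfl
  · have hI : T v = Complex.I • v := by simp [smul_def]
    simp only [hI, LinearMap.restrictScalars_apply, map_smul]

end ComplexStructure

section SeveralComplexVariables

variable {E : Type*} [NormedAddCommGroup E] [NormedSpace ℂ E] [CompleteSpace E] {d : ℕ}

/-- Identity theorem on a polydisc, by applying the one-variable identity theorem to one
coordinate at a time. -/
theorem eqOn_zero_of_forall_mem_pi {g : (Fin d → ℂ) → E} {q c : Fin d → ℂ} {r : ℝ}
    (hg : DifferentiableOn ℂ g (ball q r)) (hc : c ∈ ball q r) {D : Fin d → Set ℂ}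
    (hD : ∀ i, ∃ᶠ w in 𝓝[≠] c i, w ∈ D i)
    (hgD : ∀ z ∈ ball q r, (∀ i, z i ∈ D i) → g z = 0) :
    EqOn g 0 (ball q r) := by
  classical
  have hr : 0 < r := pos_of_mem_ball hc
  have hball : ∀ z, z ∈ ball q r ↔ z ∈ univ.pi fun i => ball (q i) r := by
    simp [ball_pi q hr]
  suffices h : ∀ s : Finset (Fin d), ∀ z ∈ ball q r, (∀ i ∉ s, z i ∈ D i) → g z = 0 from
    fun z hz => h Finset.univ z hz fun i hi => absurd (Finset.mem_univ i) hi
  intro s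
  induction s using Finset.induction_on with
  | empty => exact fun z hz h => hgD z hz fun i => h i (Finset.notMem_empty i)
  | insert ℓ s _ ih =>
    intro z hz hzD
    have hupd : MapsTo (Function.update z ℓ) (ball (q ℓ) r) (ball q r) := fun w hw => by
      rw [hball, update_mem_pi_iff_of_mem ((hball z).1 hz)]
      exact fun _ => hw
    have hφ : AnalyticOnNhd ℂ (g ∘ Function.update z ℓ) (ball (q ℓ) r) :=
      (hg.comp (fun w _ => (hasFDerivAt_update z w).differentiableAt.differentiableWithinAt)
        hupd).analyticOnNhd isOpen_ball
    have hφD : ∀ w ∈ D ℓ ∩ ball (q ℓ) r, g (Function.update z ℓ w) = 0 := by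
      refine fun w hw => ih _ (hupd hw.2) fun i hi => ?_
      rcases eq_or_ne i ℓ with rfl | hne
      · simpa using hw.1
      · simpa [hne] using hzD i (by simp [hne, hi])
    have hcℓ : c ℓ ∈ ball (q ℓ) r := ((hball c).1 hc) ℓ trivial
    have hfreq : ∃ᶠ w in 𝓝[≠] c ℓ, g (Function.update z ℓ w) = 0 :=
      ((hD ℓ).and_eventually (eventually_nhdsWithin_of_eventually_nhds
        (isOpen_ball.mem_nhds hcℓ))).mono hφD
    simpa using hφ.eqOn_zero_of_preconnected_of_frequently_eq_zero
      (convex_ball _ _).isPreconnected hcℓ hfreq (((hball z).1 hz) ℓ trivial)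

theorem eqOn_zero_connectedComponentIn {g : (Fin d → ℂ) → E} {U : Set (Fin d → ℂ)}
    (hU : IsOpen U) (hg : DifferentiableOn ℂ g U) {z₀ : Fin d → ℂ} (hz₀ : g =ᶠ[𝓝 z₀] 0) :
    EqOn g 0 (connectedComponentIn U z₀) := by
  intro z hz
  set A := {z | g =ᶠ[𝓝 z] 0}
  have hclosure : closure A ∩ connectedComponentIn U z₀ ⊆ A := by
    rintro x ⟨hxA, hxU⟩
    obtain ⟨ε, hε, hεU⟩ := isOpen_iff.1 hU x (connectedComponentIn_subset U z₀ hxU)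
    obtain ⟨p, hpA, hxp⟩ := mem_closure_iff.1 hxA ε hε
    obtain ⟨δ, hδ, hpδ⟩ := eventually_nhds_iff_ball.1 hpA
    have hzero := eqOn_zero_of_forall_mem_pi (hg.mono hεU) (mem_ball'.2 hxp)
      (D := fun i => ball (p i) δ)
      (fun i => (eventually_nhdsWithin_of_eventually_nhds (ball_mem_nhds _ hδ)).frequently)
      (fun y _ hy => hpδ y ((dist_pi_lt_iff hδ).2 hy))
    exact eventually_of_mem (ball_mem_nhds x hε) hzero
  have hz₀U : z₀ ∈ U := connectedComponentIn_nonempty_iff.1 ⟨z, hz⟩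
  have hsub : connectedComponentIn U z₀ ⊆ A :=
    isPreconnected_connectedComponentIn.subset_of_closure_inter_subset
      isOpen_setOfPred_eventually_nhds ⟨z₀, mem_connectedComponentIn hz₀U, hz₀⟩ hclosure
  exact (hsub hz).self_of_nhds

theorem frequently_im_eq_zero {c : ℂ} (hc : c.im = 0) : ∃ᶠ w in 𝓝[≠] c, w.im = 0 := by
  obtain ⟨x, rfl⟩ : ∃ x : ℝ, (x : ℂ) = c := ⟨c.re, Complex.ext rfl hc.symm⟩
  have hx : Tendsto ((↑) : ℝ → ℂ) (𝓝[≠] x) (𝓝[≠] (x : ℂ)) :=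
    Complex.continuous_ofReal.continuousWithinAt.tendsto_nhdsWithin
      fun _ hy => Complex.ofReal_injective.ne hy
  exact hx.frequently (Frequently.of_forall Complex.ofReal_im)

theorem eventuallyEq_zero_of_eqOn_real {g : (Fin d → ℂ) → E} {U : Set (Fin d → ℂ)}
    (hU : IsOpen U) (hg : DifferentiableOn ℂ g U)
    (hreal : ∀ z ∈ U, (∀ i, (z i).im = 0) → g z = 0)
    {x : Fin d → ℂ} (hx : x ∈ U) (hxreal : ∀ i, (x i).im = 0) :
    g =ᶠ[𝓝 x] 0 := by
  obtain ⟨r, hr, hrU⟩ := isOpen_iff.1 hU x hx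
  exact eventually_of_mem (ball_mem_nhds x hr) <|
    eqOn_zero_of_forall_mem_pi (hg.mono hrU) (mem_ball_self hr) (D := fun _ => {w | w.im = 0})
      (fun i => frequently_im_eq_zero (hxreal i)) fun z hz => hreal z (hrU hz)

end SeveralComplexVariables

section Holomorphy

variable {E G : Type*} [NormedAddCommGroup E] [NormedSpace ℂ E] [NormedSpace ℝ E]
  [IsScalarTower ℝ ℂ E] [NormedAddCommGroup G] [NormedSpace ℂ G] [NormedSpace ℝ G]
  [IsScalarTower ℝ ℂ G]

theorem smul_eq_re_smul_add_im_smul_I_smul (c : ℂ) (w : E) :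
    c • w = c.re • w + c.im • (Complex.I • w) := by
  conv_lhs => rw [← c.re_add_im]
  rw [add_smul, mul_smul, ← Complex.coe_algebraMap, algebraMap_smul, algebraMap_smul]

theorem HasFDerivAt.differentiableAt_complex {g : E → G} {D : E →L[ℝ] G} {z : E}
    (hg : HasFDerivAt g D z) (hD : ∀ w, D (Complex.I • w) = Complex.I • D w) :
    DifferentiableAt ℂ g z := by
  let DC : E →L[ℂ] G :=
    { D with
      map_smul' := fun c w => by
        simp only [AddHom.toFun_eq_coe, LinearMap.coe_toAddHom, ContinuousLinearMap.coe_coe,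
          RingHom.id_apply, smul_eq_re_smul_add_im_smul_I_smul c, map_add, map_smul, hD] }
  exact (hasFDerivAt_of_restrictScalars ℝ hg rfl : HasFDerivAt g DC z).differentiableAt

end Holomorphy

section Slices

variable {n d : ℕ}

def reIm (d : ℕ) : (Fin d → ℂ) →L[ℝ] (Fin d → ℝ) × (Fin d → ℝ) :=
  (ContinuousLinearMap.pi fun ℓ => Complex.reCLM.comp (ContinuousLinearMap.proj ℓ)).prod
    (ContinuousLinearMap.pi fun ℓ => Complex.imCLM.comp (ContinuousLinearMap.proj ℓ))

theorem Psi_eq_Phi_comp_reIm (I : EndE n) : Psi n d I = Phi n d I ∘ reIm d := rfl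

theorem reIm_I_smul (w : Fin d → ℂ) : reIm d (Complex.I • w) = (-(reIm d w).2, (reIm d w).1) := by
  ext ℓ <;> simp [reIm]

theorem Psi_eq_of_im_eq_zero (I J : EndE n) {z : Fin d → ℂ} (hz : ∀ ℓ, (z ℓ).im = 0) :
    Psi n d I z = Psi n d J z := by
  ext1 ℓ
  simp only [Psi, hz ℓ, zero_smul ℝ I, zero_smul ℝ J]

theorem continuous_Phi (I : EndE n) : Continuous (Phi n d I) :=
  continuous_pi fun ℓ => by unfold Phi; fun_prop

theorem SliceOpen.isOpen_preimage_Phi {𝒞 : Set (EndE n)} {Ω : Set (Fin d → EndE n)}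
    (hΩ : SliceOpen n d 𝒞 Ω) {I : EndE n} (hI : I ∈ 𝒞) : IsOpen (Phi n d I ⁻¹' Ω) := by
  obtain ⟨U, hU, hΩU⟩ := hΩ.2 I hI
  have hslice : Phi n d I ⁻¹' CId n d I = univ :=
    eq_univ_of_forall fun p ℓ => ⟨p.1 ℓ, p.2 ℓ, rfl⟩
  have hpre : Phi n d I ⁻¹' Ω = Phi n d I ⁻¹' U := by
    rw [← inter_univ (Phi n d I ⁻¹' Ω), ← hslice, ← preimage_inter, hΩU, preimage_inter, hslice,
      inter_univ]
  exact hpre ▸ hU.preimage (continuous_Phi I)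

theorem SliceOpen.isOpen_preimage_Psi {𝒞 : Set (EndE n)} {Ω : Set (Fin d → EndE n)}
    (hΩ : SliceOpen n d 𝒞 Ω) {I : EndE n} (hI : I ∈ 𝒞) : IsOpen (Psi n d I ⁻¹' Ω) := by
  rw [Psi_eq_Phi_comp_reIm, preimage_comp]
  exact (hΩ.isOpen_preimage_Phi hI).preimage (reIm d).continuous

theorem map_neg_snd_fst_of_cauchyRiemann {F : Type*} [NormedAddCommGroup F] [NormedSpace ℝ F]
    {I : F →L[ℝ] F} (hI : I * I = -1) (D : (Fin d → ℝ) × (Fin d → ℝ) →L[ℝ] F)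
    (hCR : ∀ ℓ, D (ex d ℓ) + I (D (ey d ℓ)) = 0) (p : (Fin d → ℝ) × (Fin d → ℝ)) :
    D (-p.2, p.1) = I (D p) := by
  have hII : ∀ v, I (I v) = -v := fun v => by simpa using congrArg (· v) hI
  have hy : ∀ ℓ, I (D (ey d ℓ)) = -D (ex d ℓ) := fun ℓ => eq_neg_of_add_eq_zero_right (hCR ℓ)
  have hx : ∀ ℓ, I (D (ex d ℓ)) = D (ey d ℓ) := fun ℓ => by
    rw [← neg_neg (D (ex d ℓ)), ← hy, map_neg, hII, neg_neg]
  let b := (Pi.basisFun ℝ (Fin d)).prod (Pi.basisFun ℝ (Fin d))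
  have key : D.toLinearMap ∘ₗ ((-LinearMap.snd ℝ _ _).prod (LinearMap.fst ℝ _ _)) =
      I.toLinearMap ∘ₗ D.toLinearMap := by
    refine b.ext fun i => ?_
    rcases i with ℓ | ℓ
    · simpa [b, ex, ey] using (hx ℓ).symm
    · have hneg : ((-Pi.single ℓ 1 : Fin d → ℝ), (0 : Fin d → ℝ)) = -ex d ℓ := by simp [ex]
      simpa [b, ey, hneg] using (hy ℓ).symm
  simpa using LinearMap.congr_fun key p

theorem WSRegular.exists_hasFDerivAt_comp_Psi {𝒞 : Set (EndE n)} {Ω : Set (Fin d → EndE n)}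
    {f : (Fin d → EndE n) → V n} (hΩ : SliceOpen n d 𝒞 Ω) (hf : WSRegular n d 𝒞 Ω f)
    {I : EndE n} (hI : I ∈ 𝒞) (hII : I ∈ CS n) {z : Fin d → ℂ} (hz : Psi n d I z ∈ Ω) :
    ∃ D : (Fin d → ℂ) →L[ℝ] V n, HasFDerivAt (fun z => f (Psi n d I z)) D z ∧
      ∀ w, D (Complex.I • w) = I (D w) := by
  have hp : reIm d z ∈ Phi n d I ⁻¹' Ω := hz
  have hdiff : DifferentiableAt ℝ (f ∘ Phi n d I) (reIm d z) :=
    (hf I hI).1.differentiableAt ((hΩ.isOpen_preimage_Phi hI).mem_nhds hp)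
  refine ⟨(fderiv ℝ (f ∘ Phi n d I) (reIm d z)).comp (reIm d),
    hdiff.hasFDerivAt.comp z (reIm d).hasFDerivAt, fun w => ?_⟩
  simpa [reIm_I_smul] using
    map_neg_snd_fst_of_cauchyRiemann hII _ ((hf I hI).2 _ hp) (reIm d w)

end Slices

section Representation

variable {n d k : ℕ}

theorem oneI_apply (I : EndE n) (ab : V n × V n) : oneI n I ab = ab.1 + I ab.2 := rfl

theorem zeta_apply (K : Fin k → EndE n) (ab : V n × V n) (ℓ : Fin k) :
    zeta n k K ab ℓ = oneI n (K ℓ) ab := rfl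

def diagEnd (K : Fin k → EndE n) : Module.End ℝ (Fin k → V n) :=
  LinearMap.pi fun ℓ => (K ℓ).toLinearMap ∘ₗ LinearMap.proj ℓ

theorem diagEnd_apply (K : Fin k → EndE n) (v : Fin k → V n) (ℓ : Fin k) :
    diagEnd K v ℓ = K ℓ (v ℓ) := rfl

theorem apply_apply_of_mem_CS {I : EndE n} (hI : I ∈ CS n) (v : V n) : I (I v) = -v := by
  simpa using congrArg (· v) hI

theorem diagEnd_mul_self {K : Fin k → EndE n} (hK : ∀ ℓ, K ℓ ∈ CS n) :
    diagEnd K * diagEnd K = -1 := by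
  refine LinearMap.ext fun v => funext fun ℓ => ?_
  exact apply_apply_of_mem_CS (hK ℓ) (v ℓ)

theorem diagEnd_zeta {K : Fin k → EndE n} (hK : ∀ ℓ, K ℓ ∈ CS n) (ab : V n × V n) :
    diagEnd K (zeta n k K ab) = zeta n k K (-ab.2, ab.1) := by
  funext ℓ
  simp only [diagEnd_apply, zeta_apply, oneI_apply, map_add, apply_apply_of_mem_CS (hK ℓ)]
  abel

variable {𝒞 : Set (EndE n)} {Ω : Set (Fin d → EndE n)} {f : (Fin d → EndE n) → V n}

theorem WSRegular.differentiableOn_comp_Psi (hΩ : SliceOpen n d 𝒞 Ω) (hcs : 𝒞 ⊆ CS n)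
    (hf : WSRegular n d 𝒞 Ω f) {K : Fin k → EndE n} (hK : ∀ ℓ, K ℓ ∈ 𝒞) {m : ℕ}
    (L : (Fin k → V n) →ₗ[ℝ] Fin m → ℂ) (hL : ∀ v, L (diagEnd K v) = Complex.I • L v) :
    DifferentiableOn ℂ (fun z => L fun ℓ => f (Psi n d (K ℓ) z)) (⋂ ℓ, Psi n d (K ℓ) ⁻¹' Ω) := by
  intro z hz
  choose D hD hDI using fun ℓ =>
    hf.exists_hasFDerivAt_comp_Psi hΩ (hK ℓ) (hcs (hK ℓ)) (mem_iInter.1 hz ℓ)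
  have hpi : ∀ w, ContinuousLinearMap.pi D (Complex.I • w) =
      diagEnd K (ContinuousLinearMap.pi D w) := fun w => funext fun ℓ => hDI ℓ w
  refine (HasFDerivAt.differentiableAt_complex
    (L.toContinuousLinearMap.hasFDerivAt.comp z (hasFDerivAt_pi.2 hD)) fun w => ?_)
    |>.differentiableWithinAt
  simp only [ContinuousLinearMap.comp_apply, LinearMap.coe_toContinuousLinearMap', hpi, hL]

theorem exists_oneI_eq_of_mem_CPath (hΩ : SliceOpen n d 𝒞 Ω) (hcs : 𝒞 ⊆ CS n)
    (hf : WSRegular n d 𝒞 Ω f) {γ : ℝ → Fin d → ℂ} (hγ : IsPath0 d γ) {K : Fin k → EndE n}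
    (hK : ∀ ℓ, K ℓ ∈ CPath n d 𝒞 Ω γ) {t : ℝ} (ht : t ∈ Icc 0 1) :
    ∃ ab : V n × V n, ∀ ℓ, f (Psi n d (K ℓ) (γ t)) = oneI n (K ℓ) ab := by
  have hKcs : ∀ ℓ, K ℓ ∈ CS n := fun ℓ => hcs (hK ℓ).1
  obtain ⟨m, L, hker, hLK⟩ := exists_linearMap_ker_eq_of_mapsTo_complexStructure (diagEnd K)
    (diagEnd_mul_self hKcs) (LinearMap.range (zeta n k K))
    (by rintro _ ⟨ab, rfl⟩; exact ⟨_, (diagEnd_zeta hKcs ab).symm⟩)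
  set U := ⋂ ℓ, Psi n d (K ℓ) ⁻¹' Ω
  have hU : IsOpen U := isOpen_iInter_of_finite fun ℓ => hΩ.isOpen_preimage_Psi (hK ℓ).1
  have hγU : MapsTo γ (Icc 0 1) U := fun s hs => mem_iInter.2 fun ℓ => (hK ℓ).2 s hs
  have hg := hf.differentiableOn_comp_Psi hΩ hcs (fun ℓ => (hK ℓ).1) L hLK
  have hreal : ∀ z ∈ U, (∀ i, (z i).im = 0) → (L fun ℓ => f (Psi n d (K ℓ) z)) = 0 := by
    intro z _ hz
    rw [← LinearMap.mem_ker, hker]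
    refine ⟨(f (Psi n d 0 z), 0), funext fun ℓ => ?_⟩
    rw [zeta_apply, oneI_apply, map_zero, add_zero, Psi_eq_of_im_eq_zero _ _ hz]
  have hγ0 : γ 0 ∈ U := hγU (left_mem_Icc.2 zero_le_one)
  have hγt : γ t ∈ connectedComponentIn U (γ 0) :=
    (isPreconnected_Icc.image γ hγ.1).subset_connectedComponentIn
      ⟨0, left_mem_Icc.2 zero_le_one, rfl⟩ hγU.image_subset ⟨t, ht, rfl⟩
  have hzero := eqOn_zero_connectedComponentIn hU hg
    (eventuallyEq_zero_of_eqOn_real hU hg hreal hγ0 hγ.2) hγt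
  obtain ⟨ab, hab⟩ : (fun ℓ => f (Psi n d (K ℓ) (γ t))) ∈ LinearMap.range (zeta n k K) :=
    hker ▸ hzero
  exact ⟨ab, fun ℓ => (congrFun hab ℓ).symm⟩

end Representation

theorem LinearMap.apply_innerInverse_apply_of_ker_le {R X Y Z : Type*} [CommRing R]
    [AddCommGroup X] [Module R X] [AddCommGroup Y] [Module R Y] [AddCommGroup Z] [Module R Z]
    {A : X →ₗ[R] Y} {P : Y →ₗ[R] X} {B : X →ₗ[R] Z} (hP : A ∘ₗ P ∘ₗ A = A)
    (hker : LinearMap.ker A ≤ LinearMap.ker B) (x : X) : B (P (A x)) = B x := by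
  have hmem : P (A x) - x ∈ LinearMap.ker A := by
    rw [LinearMap.mem_ker, map_sub, sub_eq_zero]
    exact LinearMap.congr_fun hP x
  simpa [sub_eq_zero] using hker hmem

theorem path_representation_formula_general (n d : ℕ)
    (𝒞 : Set (EndE n)) (hcs : 𝒞 ⊆ CS n)
    (Ω : Set (Fin d → EndE n)) (hΩ : SliceOpen n d 𝒞 Ω)
    (f : (Fin d → EndE n) → V n) (hf : WSRegular n d 𝒞 Ω f)
    (γ : ℝ → Fin d → ℂ) (hγ : IsPath0 d γ)
    (k : ℕ) (J : Fin k → EndE n) (hJ : ∀ ℓ, J ℓ ∈ CPath n d 𝒞 Ω γ)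
    (I : EndE n) (hI : I ∈ CPath n d 𝒞 Ω γ)
    (hker : (⨅ ℓ, LinearMap.ker (oneI n (J ℓ))) ≤ LinearMap.ker (oneI n I))
    (P : (Fin k → V n) →ₗ[ℝ] V n × V n)
    (hP : zeta n k J ∘ₗ P ∘ₗ zeta n k J = zeta n k J) :
    ∀ t ∈ Set.Icc (0:ℝ) 1,
      f (Psi n d I (γ t)) = oneI n I (P fun ℓ => f (Psi n d (J ℓ) (γ t))) := by
  intro t ht
  obtain ⟨ab, hab⟩ :=
    exists_oneI_eq_of_mem_CPath hΩ hcs hf hγ (K := Fin.cons I J) (Fin.cases hI hJ) ht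
  have hIab : f (Psi n d I (γ t)) = oneI n I ab := by simpa using hab 0
  have hJab : (fun ℓ => f (Psi n d (J ℓ) (γ t))) = zeta n k J ab :=
    funext fun ℓ => by simpa [zeta_apply] using hab ℓ.succ
  rw [hIab, hJab,
    LinearMap.apply_innerInverse_apply_of_ker_le hP ((LinearMap.ker_pi _).trans_le hker)]

/-- (Path-representation Formula) If f is weak slice regular on a slice-open Ω,
γ ∈ 𝒫(ℂ^d, Ω), J₁, …, J_k ∈ 𝒞(γ, Ω), I ∈ 𝒞(γ, Ω) with
ker(1, I) ⊇ ⋂_ℓ ker(1, J_ℓ), and P is linear with ζ(J) ∘ P ∘ ζ(J) = ζ(J), then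
f(γ^I(t)) = (1, I)(P(f(γ^{J₁}(t)), …, f(γ^{J_k}(t)))) for all t ∈ [0,1]. -/
theorem path_representation_formula (n d : ℕ) (hn : 1 ≤ n) (hd : 1 ≤ d)
    (𝒞 : Set (EndE n)) (h𝒞 : 𝒞.Nonempty) (hsym : ∀ I ∈ 𝒞, -I ∈ 𝒞) (hcs : 𝒞 ⊆ CS n)
    (Ω : Set (Fin d → EndE n)) (hΩ : SliceOpen n d 𝒞 Ω)
    (f : (Fin d → EndE n) → V n) (hf : WSRegular n d 𝒞 Ω f)
    (γ : ℝ → Fin d → ℂ) (hγ : IsPath0 d γ)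
    (k : ℕ) (J : Fin k → EndE n) (hJ : ∀ ℓ, J ℓ ∈ CPath n d 𝒞 Ω γ)
    (I : EndE n) (hI : I ∈ CPath n d 𝒞 Ω γ)
    (hker : (⨅ ℓ, LinearMap.ker (oneI n (J ℓ))) ≤ LinearMap.ker (oneI n I))
    (P : (Fin k → V n) →ₗ[ℝ] V n × V n)
    (hP : zeta n k J ∘ₗ P ∘ₗ zeta n k J = zeta n k J) :
    ∀ t ∈ Set.Icc (0:ℝ) 1,
      f (Psi n d I (γ t)) = oneI n I (P fun ℓ => f (Psi n d (J ℓ) (γ t))) :=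
  path_representation_formula_general n d 𝒞 hcs Ω hΩ f hf γ hγ k J hJ I hI hker P hP
end
end
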